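/- Let X₁, X₂ and Y be Banach spaces, let X = X₁ ⊕_1 X₂, and let T : X → Y be a bounded linear operator with restrictions T₁ and T₂. If T₁ and T₂ are narrow operators, then T is a narrow operator. -/

import Mathlib

/-!
Split `x`, `y` into their components in `X₁` and `X₂` and apply the narrowness of `Tᵢ` to the
normalized components, tested against the restriction of `f` to `Xᵢ`. Scaled back, each `zᵢ`
has the norm of `yᵢ` and nearly adds in norm to `xᵢ`; since norms add in the `ℓ₁`-sum,
`z = (z₁, z₂)` is a unit vector with `‖x + z‖ ≥ 2 - ε`, while `T` and `f` split over the
components, so the errors `‖Tᵢ (yᵢ - zᵢ)‖ + |f (yᵢ - zᵢ)|` add up to at most `ε`.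
-/

/-- A bounded linear operator `T : X → Y` is *narrow* if for every `x, y` in the unit
sphere of `X`, every continuous linear functional `f` on `X` and every `ε > 0` there is
`z` in the unit sphere with `‖x + z‖ ≥ 2 - ε` and `‖T (y - z)‖ + |f (y - z)| ≤ ε`. -/
def IsNarrow {X Y : Type*} [NormedAddCommGroup X] [NormedSpace ℝ X]
    [NormedAddCommGroup Y] [NormedSpace ℝ Y] (T : X →L[ℝ] Y) : Prop :=
  ∀ x y : X, ‖x‖ = 1 → ‖y‖ = 1 → ∀ f : X →L[ℝ] ℝ, ∀ ε : ℝ, 0 < ε →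
    ∃ z : X, ‖z‖ = 1 ∧ 2 - ε ≤ ‖x + z‖ ∧ ‖T (y - z)‖ + |f (y - z)| ≤ ε

open WithLp

section Normed

variable {X : Type*} [NormedAddCommGroup X] [NormedSpace ℝ X]

/-- Tested against a norming functional of `u + v`, both `u` and `v` are almost norming. -/
lemma le_norm_smul_add_smul {u v : X} (hu : ‖u‖ ≤ 1) (hv : ‖v‖ ≤ 1) {a b : ℝ}
    (ha : 0 ≤ a) (hb : 0 ≤ b) : (a + b) * (‖u + v‖ - 1) ≤ ‖a • u + b • v‖ := by
  obtain ⟨g, hg, hguv⟩ := exists_dual_vector'' ℝ (u + v)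
  have hg_le : ∀ w : X, ‖w‖ ≤ 1 → g w ≤ 1 := fun w hw =>
    (le_abs_self _).trans <| (g.le_opNorm w).trans <| mul_le_one₀ hg (norm_nonneg _) hw
  have hsum : g u + g v = ‖u + v‖ := by simpa using hguv
  calc (a + b) * (‖u + v‖ - 1) ≤ a * g u + b * g v := by nlinarith [hg_le u hu, hg_le v hv]
    _ = g (a • u + b • v) := by simp
    _ ≤ ‖a • u + b • v‖ :=
      (le_abs_self _).trans <| (g.le_opNorm _).trans <| mul_le_of_le_one_left (norm_nonneg _) hg

lemma exists_norm_eq_one_smul_eq [Nontrivial X] (x : X) : ∃ u : X, ‖u‖ = 1 ∧ ‖x‖ • u = x := by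
  by_cases hx : x = 0
  · obtain ⟨u, hu⟩ := exists_norm_eq X zero_le_one
    exact ⟨u, hu, by simp [hx]⟩
  · exact ⟨‖x‖⁻¹ • x, by simp [norm_smul, hx], smul_inv_smul₀ (norm_ne_zero_iff.mpr hx) x⟩

/-- Narrowness applied to the normalizations of `x` and `y`, scaled back by `‖y‖`. -/
lemma IsNarrow.exists_scaled {Y : Type*} [NormedAddCommGroup Y] [NormedSpace ℝ Y]
    {T : X →L[ℝ] Y} (hT : IsNarrow T) (x y : X) (f : X →L[ℝ] ℝ) {ε : ℝ} (hε : 0 < ε) :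
    ∃ z : X, ‖z‖ = ‖y‖ ∧ (‖x‖ + ‖y‖) * (1 - ε) ≤ ‖x + z‖ ∧
      ‖T (y - z)‖ + |f (y - z)| ≤ ‖y‖ * ε := by
  by_cases hy : y = 0
  · subst hy
    refine ⟨0, by simp, ?_, by simp⟩
    simpa using mul_le_of_le_one_right (norm_nonneg x) (by linarith : 1 - ε ≤ 1)
  have : Nontrivial X := ⟨⟨y, 0, hy⟩⟩
  have hny : 0 < ‖y‖ := norm_pos_iff.mpr hy
  obtain ⟨u, hu, hxu⟩ := exists_norm_eq_one_smul_eq x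
  obtain ⟨v, hv, hyv⟩ := exists_norm_eq_one_smul_eq y
  obtain ⟨w, hw, huw, hTf⟩ := hT u v hu hv f ε hε
  refine ⟨‖y‖ • w, by simp [norm_smul, hw], ?_, ?_⟩
  · calc (‖x‖ + ‖y‖) * (1 - ε) ≤ (‖x‖ + ‖y‖) * (‖u + w‖ - 1) :=
          mul_le_mul_of_nonneg_left (by linarith) (by positivity)
      _ ≤ ‖x + ‖y‖ • w‖ := by
          simpa only [hxu] using
            le_norm_smul_add_smul hu.le hw.le (norm_nonneg x) (norm_nonneg y)
  · have hyw : y - ‖y‖ • w = ‖y‖ • (v - w) := by rw [smul_sub, hyv]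
    rw [hyw, map_smul, map_smul, norm_smul, smul_eq_mul, abs_mul, Real.norm_of_nonneg hny.le,
      abs_of_pos hny, ← mul_add]
    gcongr

end Normed

lemma norm_add_add_abs_add_le {E : Type*} [SeminormedAddCommGroup E] (u v : E) (a b : ℝ) :
    ‖u + v‖ + |a + b| ≤ (‖u‖ + |a|) + (‖v‖ + |b|) := by
  linarith [norm_add_le u v, abs_add_le a b]

lemma WithLp.map_toLp_prod {p : ENNReal} {X₁ X₂ M F : Type*} [AddCommGroup X₁] [AddCommGroup X₂]
    [AddCommMonoid M] [FunLike F (WithLp p (X₁ × X₂)) M]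
    [AddMonoidHomClass F (WithLp p (X₁ × X₂)) M] (L : F) (a : X₁) (b : X₂) :
    L (toLp p (a, b)) = L (toLp p (a, 0)) + L (toLp p (0, b)) := by
  rw [← map_add, ← toLp_add, Prod.mk_add_mk, add_zero, zero_add]

lemma WithLp.norm_toLp_one {X₁ X₂ : Type*} [NormedAddCommGroup X₁] [NormedAddCommGroup X₂]
    (a : X₁) (b : X₂) : ‖toLp 1 (a, b)‖ = ‖a‖ + ‖b‖ :=
  prod_norm_eq_of_L1 _

theorem narrow_of_restrictions_oneSum_general
    {X₁ X₂ Y : Type*}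
    [NormedAddCommGroup X₁] [NormedSpace ℝ X₁]
    [NormedAddCommGroup X₂] [NormedSpace ℝ X₂]
    [NormedAddCommGroup Y] [NormedSpace ℝ Y]
    (T : WithLp 1 (X₁ × X₂) →L[ℝ] Y)
    (T₁ : X₁ →L[ℝ] Y) (T₂ : X₂ →L[ℝ] Y)
    (hT₁ : ∀ x₁ : X₁, T₁ x₁ = T ((WithLp.prodContinuousLinearEquiv 1 ℝ X₁ X₂).symm (x₁, 0)))
    (hT₂ : ∀ x₂ : X₂, T₂ x₂ = T ((WithLp.prodContinuousLinearEquiv 1 ℝ X₁ X₂).symm (0, x₂)))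
    (h₁ : IsNarrow T₁) (h₂ : IsNarrow T₂) :
    IsNarrow T := by
  intro x y hx hy f ε hε
  rw [prod_norm_eq_of_L1] at hx hy
  let e := (prodContinuousLinearEquiv 1 ℝ X₁ X₂).symm.toContinuousLinearMap
  let f₁ : X₁ →L[ℝ] ℝ := (f.comp e).comp (.inl ℝ X₁ X₂)
  let f₂ : X₂ →L[ℝ] ℝ := (f.comp e).comp (.inr ℝ X₁ X₂)
  obtain ⟨z₁, hz₁, hxz₁, hyz₁⟩ := h₁.exists_scaled x.fst y.fst f₁ (half_pos hε)
  obtain ⟨z₂, hz₂, hxz₂, hyz₂⟩ := h₂.exists_scaled x.snd y.snd f₂ (half_pos hε)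
  have hT : ∀ a b, T (toLp 1 (a, b)) = T₁ a + T₂ b := fun a b => by
    rw [map_toLp_prod, hT₁, hT₂]; rfl
  have hf : ∀ a b, f (toLp 1 (a, b)) = f₁ a + f₂ b := map_toLp_prod f
  refine ⟨toLp 1 (z₁, z₂), ?_, ?_, ?_⟩
  · rw [norm_toLp_one, hz₁, hz₂, hy]
  · change 2 - ε ≤ ‖toLp 1 (x.fst + z₁, x.snd + z₂)‖
    rw [norm_toLp_one]
    linear_combination hxz₁ + hxz₂ - (1 - ε / 2) * hx - (1 - ε / 2) * hy
  · change ‖T (toLp 1 (y.fst - z₁, y.snd - z₂))‖ + |f (toLp 1 (y.fst - z₁, y.snd - z₂))| ≤ ε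
    rw [hT, hf]
    calc _ ≤ ‖y.fst‖ * (ε / 2) + ‖y.snd‖ * (ε / 2) :=
          (norm_add_add_abs_add_le _ _ _ _).trans (add_le_add hyz₁ hyz₂)
      _ = ε / 2 := by linear_combination (ε / 2) * hy
      _ ≤ ε := half_le_self hε.le

theorem narrow_of_restrictions_oneSum
    {X₁ X₂ Y : Type*}
    [NormedAddCommGroup X₁] [NormedSpace ℝ X₁] [CompleteSpace X₁]
    [NormedAddCommGroup X₂] [NormedSpace ℝ X₂] [CompleteSpace X₂]
    [NormedAddCommGroup Y] [NormedSpace ℝ Y] [CompleteSpace Y]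
    (T : WithLp 1 (X₁ × X₂) →L[ℝ] Y)
    (T₁ : X₁ →L[ℝ] Y) (T₂ : X₂ →L[ℝ] Y)
    (hT₁ : ∀ x₁ : X₁, T₁ x₁ = T ((WithLp.prodContinuousLinearEquiv 1 ℝ X₁ X₂).symm (x₁, 0)))
    (hT₂ : ∀ x₂ : X₂, T₂ x₂ = T ((WithLp.prodContinuousLinearEquiv 1 ℝ X₁ X₂).symm (0, x₂)))
    (h₁ : IsNarrow T₁) (h₂ : IsNarrow T₂) :
    IsNarrow T :=
  narrow_of_restrictions_oneSum_general T T₁ T₂ hT₁ hT₂ h₁ h₂
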